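/- arXiv:math/9906098 — 2 statements merged into one kernel-verified Lean document; each statement's English description precedes it below -/
import Mathlib

section
/- Let c₁, …, cₙ be hermitian matrices in M_k(ℂ) such that σ(ξ) = Σⱼ ξⱼ·cⱼ is invertible for every nonzero ξ ∈ ℝⁿ. Then for every ξ ∈ ℝⁿ the matrices σ(ξ) + i·I and σ(ξ) − i·I are invertible, the maps ξ ↦ (σ(ξ) + i·I)⁻¹ and ξ ↦ (σ(ξ) − i·I)⁻¹ are continuous, and their norms tend to zero at infinity: for every ε > 0 there exists R > 0 such that ‖(σ(ξ) ± i·I)⁻¹‖ ≤ ε whenever ‖ξ‖ ≥ R. (This is Lemma 5.3, that the resolvents of an elliptic self-adjoint first-order symbol vanish at infinity on the cotangent fibers, in the Euclidean constant-coefficient case.) -/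
set_option maxHeartbeats 1000000
set_option synthInstance.maxHeartbeats 400000


private lemma aux_selfAdj {k : ℕ} {a : Matrix (Fin k) (Fin k) ℂ} (ha : a.IsHermitian) :
    IsSelfAdjoint (Matrix.toEuclideanCLM (𝕜 := ℂ) a) := by
  have h : star a = a := ha
  show star (Matrix.toEuclideanCLM (𝕜 := ℂ) a) = _
  rw [← map_star, h]

private lemma aux_isUnit_iff {k : ℕ} (M : Matrix (Fin k) (Fin k) ℂ) :
    IsUnit (Matrix.toEuclideanCLM (𝕜 := ℂ) M) ↔ IsUnit M := by
  constructor
  · intro h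
    have h2 := h.map (Matrix.toEuclideanCLM (𝕜 := ℂ) (n := Fin k)).symm.toRingEquiv
    simpa using h2
  · intro h
    exact h.map (Matrix.toEuclideanCLM (𝕜 := ℂ) (n := Fin k)).toRingEquiv

private lemma aux_unit {k : ℕ} {a : Matrix (Fin k) (Fin k) ℂ} (ha : a.IsHermitian)
    {s : ℂ} (hre : s.re = 0) (hs1 : ‖s‖ = 1) :
    IsUnit (a + s • (1 : Matrix (Fin k) (Fin k) ℂ)) := by
  have hsa := aux_selfAdj ha
  have him : s.im ≠ 0 := by
    intro h
    rw [Complex.norm_def, Complex.normSq_apply, hre, h] at hs1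
    simp at hs1
  have hns : (-s) ∉ spectrum ℂ (Matrix.toEuclideanCLM (𝕜 := ℂ) a) := by
    intro h
    have := hsa.im_eq_zero_of_mem_spectrum h
    simp only [Complex.neg_im, neg_eq_zero] at this
    exact him this
  rw [spectrum.notMem_iff] at hns
  have h2 : IsUnit (Matrix.toEuclideanCLM (𝕜 := ℂ) a + s • 1) := by
    have h3 := hns.neg
    rw [Algebra.algebraMap_eq_smul_one, neg_sub, neg_smul, sub_neg_eq_add] at h3
    exact h3
  rw [← aux_isUnit_iff]
  simpa [map_add] using h2

private lemma aux_norm_id {k : ℕ} {T : EuclideanSpace ℂ (Fin k) →L[ℂ] EuclideanSpace ℂ (Fin k)}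
    (hT : IsSelfAdjoint T) {s : ℂ} (hre : s.re = 0) (hs1 : ‖s‖ = 1)
    (x : EuclideanSpace ℂ (Fin k)) :
    ‖T x + s • x‖ ^ 2 = ‖T x‖ ^ 2 + ‖x‖ ^ 2 := by
  have hsym := hT.isSymmetric
  have hreal : (inner ℂ (T x) x : ℂ).im = 0 := by
    have h1 : (starRingEnd ℂ) (inner ℂ (T x) x : ℂ) = inner ℂ (T x) x := by
      rw [inner_conj_symm]
      exact (hsym x x).symm
    have := Complex.conj_im (inner ℂ (T x) x : ℂ)
    rw [h1] at this
    linarith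
  have hcross : RCLike.re (inner ℂ (T x) (s • x) : ℂ) = 0 := by
    rw [inner_smul_right]
    simp only [RCLike.re_to_complex, Complex.mul_re, hre, hreal]
    ring
  rw [@norm_add_sq ℂ _ _ _ _ (T x) (s • x), hcross, norm_smul, hs1]
  ring

private lemma aux_inverse_map {k : ℕ} (M : Matrix (Fin k) (Fin k) ℂ) :
    Matrix.toEuclideanCLM (𝕜 := ℂ) (Ring.inverse M) =
      Ring.inverse (Matrix.toEuclideanCLM (𝕜 := ℂ) M) := by
  by_cases h : IsUnit M
  · obtain ⟨u, rfl⟩ := h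
    rw [Ring.inverse_unit]
    obtain ⟨v, hv⟩ := (aux_isUnit_iff (u : Matrix (Fin k) (Fin k) ℂ)).2 u.isUnit
    rw [← hv, Ring.inverse_unit]
    have hmul : (v : EuclideanSpace ℂ (Fin k) →L[ℂ] EuclideanSpace ℂ (Fin k)) *
        Matrix.toEuclideanCLM (𝕜 := ℂ) ↑u⁻¹ = 1 := by
      rw [hv, ← map_mul, ← Units.val_mul, mul_inv_cancel, Units.val_one, map_one]
    exact (Units.inv_eq_of_mul_eq_one_right hmul).symm
  · rw [Ring.inverse_non_unit _ h, Ring.inverse_non_unit, map_zero]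
    exact fun h' => h ((aux_isUnit_iff _).1 h')

private lemma aux_bound {k : ℕ} {a : Matrix (Fin k) (Fin k) ℂ} (ha : a.IsHermitian)
    (hu : IsUnit a) {s : ℂ} (hre : s.re = 0) (hs1 : ‖s‖ = 1) :
    ‖Matrix.toEuclideanCLM (𝕜 := ℂ) ((a + s • (1 : Matrix (Fin k) (Fin k) ℂ))⁻¹)‖ ≤
      ‖Matrix.toEuclideanCLM (𝕜 := ℂ) a⁻¹‖ := by
  set e := Matrix.toEuclideanCLM (𝕜 := ℂ) (n := Fin k) with he
  set A := a + s • (1 : Matrix (Fin k) (Fin k) ℂ) with hA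
  have hAu : IsUnit A := aux_unit ha hre hs1
  refine ContinuousLinearMap.opNorm_le_bound _ (norm_nonneg _) (fun y => ?_)
  set x := e (A⁻¹) y with hx
  have h1 : e A x = y := by
    rw [hx, ← ContinuousLinearMap.mul_apply, ← map_mul,
      Matrix.mul_nonsing_inv _ (((Matrix.isUnit_iff_isUnit_det _).mp hAu)), map_one,
      ContinuousLinearMap.one_apply]
  have h2 : e a x + s • x = y := by
    rw [← h1, hA, map_add, map_smul, map_one, ContinuousLinearMap.add_apply,
      ContinuousLinearMap.smul_apply, ContinuousLinearMap.one_apply]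
  have h3 : ‖y‖ ^ 2 = ‖e a x‖ ^ 2 + ‖x‖ ^ 2 := by
    rw [← h2]; exact aux_norm_id (aux_selfAdj ha) hre hs1 x
  have h4 : ‖e a x‖ ≤ ‖y‖ := by nlinarith [norm_nonneg (e a x), norm_nonneg x, norm_nonneg y]
  have h5 : x = e a⁻¹ (e a x) := by
    rw [← ContinuousLinearMap.mul_apply, ← map_mul,
      Matrix.nonsing_inv_mul _ (((Matrix.isUnit_iff_isUnit_det _).mp hu)), map_one,
      ContinuousLinearMap.one_apply]
  calc ‖e (A⁻¹) y‖ = ‖e a⁻¹ (e a x)‖ := by rw [← h5]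
    _ ≤ ‖e a⁻¹‖ * ‖e a x‖ := ContinuousLinearMap.le_opNorm _ _
    _ ≤ ‖e a⁻¹‖ * ‖y‖ := by
        exact mul_le_mul_of_nonneg_left h4 (norm_nonneg _)

/-- **Lemma 5.3** (Euclidean constant-coefficient case): the resolvents
`(σ(ξ) ± i·I)⁻¹` of an elliptic self-adjoint first-order symbol are defined
for all `ξ`, depend continuously on `ξ`, and vanish at infinity in the
operator norm. -/
theorem elliptic_symbol_resolvents_vanish_at_infinity
    (n k : ℕ)
    (c : Fin n → Matrix (Fin k) (Fin k) ℂ)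
    (hc : ∀ j, (c j).IsHermitian)
    (σ : EuclideanSpace ℝ (Fin n) → Matrix (Fin k) (Fin k) ℂ)
    (hσ : ∀ ξ, σ ξ = ∑ j, (ξ j : ℂ) • c j)
    (hell : ∀ ξ : EuclideanSpace ℝ (Fin n), ξ ≠ 0 → IsUnit (σ ξ)) :
    (∀ ξ, IsUnit (σ ξ + Complex.I • (1 : Matrix (Fin k) (Fin k) ℂ)) ∧
          IsUnit (σ ξ - Complex.I • (1 : Matrix (Fin k) (Fin k) ℂ))) ∧
    Continuous (fun ξ => Matrix.toEuclideanCLM (𝕜 := ℂ)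
      ((σ ξ + Complex.I • (1 : Matrix (Fin k) (Fin k) ℂ))⁻¹)) ∧
    Continuous (fun ξ => Matrix.toEuclideanCLM (𝕜 := ℂ)
      ((σ ξ - Complex.I • (1 : Matrix (Fin k) (Fin k) ℂ))⁻¹)) ∧
    (∀ ε > (0 : ℝ), ∃ R > (0 : ℝ), ∀ ξ : EuclideanSpace ℝ (Fin n), R ≤ ‖ξ‖ →
      ‖Matrix.toEuclideanCLM (𝕜 := ℂ)
          ((σ ξ + Complex.I • (1 : Matrix (Fin k) (Fin k) ℂ))⁻¹)‖ ≤ ε ∧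
      ‖Matrix.toEuclideanCLM (𝕜 := ℂ)
          ((σ ξ - Complex.I • (1 : Matrix (Fin k) (Fin k) ℂ))⁻¹)‖ ≤ ε) := by
  have hIre : Complex.I.re = 0 := by simp
  have hI1 : ‖Complex.I‖ = 1 := by simp
  have hnIre : (-Complex.I).re = 0 := by simp
  have hnI1 : ‖-Complex.I‖ = 1 := by simp
  -- hermitian symbol
  have hherm : ∀ ξ, (σ ξ).IsHermitian := by
    intro ξ
    rw [hσ]
    show Matrix.conjTranspose _ = _
    rw [Matrix.conjTranspose_sum]
    refine Finset.sum_congr rfl fun j _ => ?_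
    rw [Matrix.conjTranspose_smul, show Matrix.conjTranspose (c j) = c j from hc j]
    congr 1
    simp [Complex.star_def, Complex.conj_ofReal]
  -- rewrite minus as plus
  have hsub : ∀ ξ, σ ξ - Complex.I • (1 : Matrix (Fin k) (Fin k) ℂ) =
      σ ξ + (-Complex.I) • (1 : Matrix (Fin k) (Fin k) ℂ) := by
    intro ξ; rw [sub_eq_add_neg, neg_smul]
  -- units
  have hunits : ∀ ξ, IsUnit (σ ξ + Complex.I • (1 : Matrix (Fin k) (Fin k) ℂ)) ∧
      IsUnit (σ ξ - Complex.I • (1 : Matrix (Fin k) (Fin k) ℂ)) := by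
    intro ξ
    refine ⟨aux_unit (hherm ξ) hIre hI1, ?_⟩
    rw [hsub]; exact aux_unit (hherm ξ) hnIre hnI1
  -- T
  set e := Matrix.toEuclideanCLM (𝕜 := ℂ) (n := Fin k) with he
  set T : EuclideanSpace ℝ (Fin n) → EuclideanSpace ℂ (Fin k) →L[ℂ] EuclideanSpace ℂ (Fin k) :=
    fun ξ => ∑ j, (ξ j : ℂ) • e (c j) with hT
  have hTσ : ∀ ξ, e (σ ξ) = T ξ := by
    intro ξ
    rw [hσ, map_sum]
    exact Finset.sum_congr rfl fun j _ => map_smul _ _ _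
  have hTcont : Continuous T := by
    apply continuous_finset_sum
    intro j _
    exact ((Complex.continuous_ofReal.comp ((continuous_apply j).comp (PiLp.continuous_ofLp 2 _))).smul continuous_const)
  -- general continuity lemma for resolvents
  have hcont : ∀ s : ℂ, s.re = 0 → ‖s‖ = 1 →
      Continuous (fun ξ => e ((σ ξ + s • (1 : Matrix (Fin k) (Fin k) ℂ))⁻¹)) := by
    intro s hre hs1
    have heq : (fun ξ => e ((σ ξ + s • (1 : Matrix (Fin k) (Fin k) ℂ))⁻¹)) =
        fun ξ => Ring.inverse (T ξ + s • 1) := by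
      funext ξ
      rw [Matrix.nonsing_inv_eq_ringInverse, aux_inverse_map, map_add, map_smul, map_one, hTσ]
    rw [heq]
    rw [continuous_iff_continuousAt]
    intro ξ
    have hU : IsUnit (T ξ + s • 1) := by
      have := (aux_isUnit_iff (σ ξ + s • (1 : Matrix (Fin k) (Fin k) ℂ))).2
        (aux_unit (hherm ξ) hre hs1)
      rwa [map_add, map_smul, map_one, hTσ] at this
    obtain ⟨v, hv⟩ := hU
    have h1 : ContinuousAt Ring.inverse (T ξ + s • 1) := by
      rw [← hv]; exact NormedRing.inverse_continuousAt v
    exact ContinuousAt.comp (f := fun ξ => T ξ + s • 1) h1 ((hTcont.add continuous_const).continuousAt)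
  refine ⟨hunits, hcont Complex.I hIre hI1, ?_, ?_⟩
  · have := hcont (-Complex.I) hnIre hnI1
    simpa only [← hsub] using this
  -- decay
  intro ε hε
  -- bound on the sphere
  have hcontinv : ContinuousOn (fun ξ => Ring.inverse (T ξ))
      (Metric.sphere (0 : EuclideanSpace ℝ (Fin n)) 1) := by
    intro ξ hξ
    have hξ0 : ξ ≠ 0 := by
      intro h
      rw [Metric.mem_sphere, h] at hξ
      simp at hξ
    have hU : IsUnit (T ξ) := by
      have := (aux_isUnit_iff (σ ξ)).2 (hell ξ hξ0)
      rwa [hTσ] at this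
    obtain ⟨v, hv⟩ := hU
    have h1 : ContinuousAt Ring.inverse (T ξ) := by
      rw [← hv]; exact NormedRing.inverse_continuousAt v
    exact (ContinuousAt.comp (f := T) h1 hTcont.continuousAt).continuousWithinAt
  obtain ⟨C, hC⟩ := (isCompact_sphere (0 : EuclideanSpace ℝ (Fin n)) 1).exists_bound_of_continuousOn hcontinv
  set D := max C 0 with hD
  have hD0 : 0 ≤ D := le_max_right _ _
  refine ⟨max 1 (D / ε), lt_of_lt_of_le one_pos (le_max_left _ _), ?_⟩
  intro ξ hξ
  have hξ1 : (1 : ℝ) ≤ ‖ξ‖ := le_trans (le_max_left _ _) hξ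
  have hξpos : (0 : ℝ) < ‖ξ‖ := lt_of_lt_of_le one_pos hξ1
  have hξ0 : ξ ≠ 0 := by
    intro h; rw [h, norm_zero] at hξpos; exact lt_irrefl _ hξpos
  set η : EuclideanSpace ℝ (Fin n) := ‖ξ‖⁻¹ • ξ with hηdef
  have hηnorm : ‖η‖ = 1 := by
    rw [hηdef, norm_smul, norm_inv, norm_norm, inv_mul_cancel₀ (ne_of_gt hξpos)]
  have hη0 : η ≠ 0 := by
    intro h; rw [h, norm_zero] at hηnorm; exact one_ne_zero hηnorm.symm
  have hηU : IsUnit (σ η) := hell η hη0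
  -- scaling identity
  set z : ℂ := (‖ξ‖ : ℂ) with hz
  have hz0 : z ≠ 0 := by
    simp only [hz, ne_eq, Complex.ofReal_eq_zero]
    exact ne_of_gt hξpos
  have hscale : σ ξ = z • σ η := by
    rw [hσ ξ, hσ η, Finset.smul_sum]
    refine Finset.sum_congr rfl fun j _ => ?_
    rw [smul_smul]
    congr 1
    rw [hz, hηdef]
    have : ((‖ξ‖⁻¹ • ξ) j : ℝ) = ‖ξ‖⁻¹ * ξ j := by simp [PiLp.smul_apply]
    rw [this]
    push_cast
    field_simp
    exact (mul_div_cancel_right₀ _ (Complex.ofReal_ne_zero.mpr hξpos.ne')).symm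
  have hinv : (σ ξ)⁻¹ = z⁻¹ • (σ η)⁻¹ := by
    apply Matrix.inv_eq_right_inv
    rw [hscale, Matrix.smul_mul, Matrix.mul_smul, smul_smul,
      mul_inv_cancel₀ hz0, one_smul,
      Matrix.mul_nonsing_inv _ ((Matrix.isUnit_iff_isUnit_det _).mp hηU)]
  -- norm of inverse of σ ξ
  have hCη : ‖e ((σ η)⁻¹)‖ ≤ D := by
    have h1 := hC η (by rw [Metric.mem_sphere]; simpa using hηnorm)
    have h2 : Ring.inverse (T η) = e ((σ η)⁻¹) := by
      rw [← hTσ, ← aux_inverse_map, Matrix.nonsing_inv_eq_ringInverse]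
    rw [h2] at h1
    exact le_trans h1 (le_max_left _ _)
  have hnorminv : ‖e ((σ ξ)⁻¹)‖ ≤ ‖ξ‖⁻¹ * D := by
    rw [hinv, map_smul, norm_smul z⁻¹ (e ((σ η)⁻¹))]
    have : ‖z⁻¹‖ = ‖ξ‖⁻¹ := by
      rw [hz, norm_inv, Complex.norm_real, norm_norm]
    rw [this]
    exact mul_le_mul_of_nonneg_left hCη (by positivity)
  have hfinal : ‖ξ‖⁻¹ * D ≤ ε := by
    rw [inv_mul_le_iff₀ hξpos]
    have h1 : D / ε ≤ ‖ξ‖ := le_trans (le_max_right _ _) hξ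
    calc D = ε * (D / ε) := by field_simp
      _ ≤ ε * ‖ξ‖ := mul_le_mul_of_nonneg_left h1 (le_of_lt hε)
      _ = ‖ξ‖ * ε := mul_comm _ _
  constructor
  · exact le_trans (le_trans (aux_bound (hherm ξ) (hell ξ hξ0) hIre hI1) hnorminv) hfinal
  · rw [hsub]
    exact le_trans (le_trans (aux_bound (hherm ξ) (hell ξ hξ0) hnIre hnI1) hnorminv) hfinal
end

section
/- Let X be a locally compact Hausdorff space and let T : X → M_k(ℂ) be a continuous map such that T(x) is hermitian for every x, and such that the smallest absolute value of the eigenvalues of T(x) is a proper function of x: for every R ≥ 0 the set {x ∈ X : some eigenvalue λ of T(x) satisfies |λ| ≤ R} is compact. Then for every continuous function f : ℝ → ℝ vanishing at infinity, the map x ↦ f(T(x)) (functional calculus applied pointwise) is continuous and vanishes at infinity on X, i.e. for every ε > 0 the set {x ∈ X : ‖f(T(x))‖ ≥ ε} is compact. (This is the analytic content of Proposition B.13, that the map Ψ(f)(x,e) = f(εx + c(e)) is a well-defined map into the endomorphisms vanishing at infinity, in the case of a trivial bundle.) -/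
/-!
Continuity of `x ↦ f(T x)` is the continuity of the continuous functional calculus in its
operator argument. For the decay, `‖f(a)‖` is the maximum of `|f|` on the spectrum of `a`, and
`|f| < ε` outside a bounded set `[-R, R]`; so `‖f(T x)‖ ≥ ε` forces an eigenvalue of `T x` into
`[-R, R]`, which by properness happens only on a compact set of `x`.
-/

open Filter Topology

theorem Matrix.continuous_toEuclideanCLM {𝕜 n : Type*} [RCLike 𝕜] [Fintype n] [DecidableEq n] :
    Continuous (Matrix.toEuclideanCLM (𝕜 := 𝕜) (n := n)) :=
  (Matrix.toEuclideanCLM (𝕜 := 𝕜) (n := n)).toAlgEquiv.toLinearMap.continuous_of_finiteDimensional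

theorem Filter.Tendsto.exists_mem_spectrum_norm_le_of_le_norm_cfc {𝕜 : Type*} (A : Type*)
    {p : A → Prop} [RCLike 𝕜] [NormedRing A] [StarRing A] [NormedAlgebra 𝕜 A]
    [IsometricContinuousFunctionalCalculus 𝕜 A p] {f : 𝕜 → 𝕜}
    (hf : Tendsto f (cocompact 𝕜) (𝓝 0)) {ε : ℝ} (hε : 0 < ε) :
    ∃ R > 0, ∀ a : A, ε ≤ ‖cfc f a‖ → ∃ t ∈ spectrum 𝕜 a, ‖t‖ ≤ R := by
  obtain ⟨K, hK, hfK⟩ := hasBasis_cocompact.eventually_iff.mp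
    (hf.eventually (Metric.ball_mem_nhds 0 hε))
  obtain ⟨R, hR, hKR⟩ := hK.isBounded.exists_pos_norm_le
  refine ⟨R, hR, fun a ha => ?_⟩
  by_contra! hsmall
  refine (norm_cfc_lt hε fun t ht => ?_).not_ge ha
  simpa using hfK fun htK => (hKR t htK).not_gt (hsmall t ht)

theorem cfc_of_proper_hermitian_family_vanishes_at_infinity_general
    (X : Type*) [TopologicalSpace X]
    (k : ℕ) (T : X → Matrix (Fin k) (Fin k) ℂ)
    (hTcont : Continuous T)
    (hTherm : ∀ x, (T x).IsHermitian)
    (hproper : ∀ R : ℝ, 0 ≤ R →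
      IsCompact {x : X | ∃ lam ∈ spectrum ℂ (T x), ‖lam‖ ≤ R})
    (f : ℝ → ℝ) (hf : Continuous f)
    (hf0 : Tendsto f (cocompact ℝ) (nhds 0)) :
    Continuous (fun x => cfc f (Matrix.toEuclideanCLM (𝕜 := ℂ) (T x))) ∧
    ∀ ε > (0 : ℝ),
      IsCompact {x : X |
        ε ≤ ‖cfc f (Matrix.toEuclideanCLM (𝕜 := ℂ) (T x))‖} := by
  have hsa : ∀ x, IsSelfAdjoint (Matrix.toEuclideanCLM (𝕜 := ℂ) (T x)) := fun x =>
    (hTherm x).isSelfAdjoint.map _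
  have hcont : Continuous fun x => cfc f (Matrix.toEuclideanCLM (𝕜 := ℂ) (T x)) :=
    Continuous.cfc_of_mem_nhdsSet f univ_mem
      (Matrix.continuous_toEuclideanCLM.comp hTcont) hsa hf.continuousOn
  refine ⟨hcont, fun ε hε => ?_⟩
  obtain ⟨R, hR, hspec⟩ := hf0.exists_mem_spectrum_norm_le_of_le_norm_cfc
    (EuclideanSpace ℂ (Fin k) →L[ℂ] EuclideanSpace ℂ (Fin k)) hε
  refine (hproper R hR.le).of_isClosed_subset (isClosed_le continuous_const hcont.norm)
    fun x hx => ?_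
  obtain ⟨t, ht, htR⟩ := hspec _ hx
  refine ⟨algebraMap ℝ ℂ t, ?_, by simpa using htR⟩
  rw [← AlgEquiv.spectrum_eq (Matrix.toEuclideanCLM (𝕜 := ℂ)) (T x)]
  exact spectrum.algebraMap_mem ℂ ht

/-- **Analytic content of Proposition B.13** (trivial bundle case): if
`T : X → M_k(ℂ)` is a continuous hermitian-matrix-valued map on a locally
compact Hausdorff space whose smallest eigenvalue modulus is proper, then
for every `f ∈ C₀(ℝ)` the map `x ↦ f(T(x))` is continuous and vanishes at
infinity. -/
theorem cfc_of_proper_hermitian_family_vanishes_at_infinity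
    (X : Type*) [TopologicalSpace X] [LocallyCompactSpace X] [T2Space X]
    (k : ℕ) (T : X → Matrix (Fin k) (Fin k) ℂ)
    (hTcont : Continuous T)
    (hTherm : ∀ x, (T x).IsHermitian)
    (hproper : ∀ R : ℝ, 0 ≤ R →
      IsCompact {x : X | ∃ lam ∈ spectrum ℂ (T x), ‖lam‖ ≤ R})
    (f : ℝ → ℝ) (hf : Continuous f)
    (hf0 : Tendsto f (cocompact ℝ) (nhds 0)) :
    Continuous (fun x => cfc f (Matrix.toEuclideanCLM (𝕜 := ℂ) (T x))) ∧
    ∀ ε > (0 : ℝ),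
      IsCompact {x : X |
        ε ≤ ‖cfc f (Matrix.toEuclideanCLM (𝕜 := ℂ) (T x))‖} :=
  cfc_of_proper_hermitian_family_vanishes_at_infinity_general X k T hTcont hTherm hproper f hf hf0
end
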